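/- In the two-client Partition-reduction instance, both clients have total completion time at most 3B if and only if the set of days on which client 1 is scheduled first has total s-weight exactly B. -/

import Mathlib

/-! With `A` the weight of the days on which client 1 goes first, `C₁ = 4B - A` and
`C₂ = 2B + A`, so `C₁ ≤ 3B` says `B ≤ A` and `C₂ ≤ 3B` says `A ≤ B`. -/

open Finset

section
variable {ι R : Type*} [Semiring R] (t : Finset ι) (p : ι → Prop) [DecidablePred p] (s : ι → R)

theorem sum_ite_self_two_mul_add_sum_filter :
    (∑ i ∈ t, if p i then s i else 2 * s i) + ∑ i ∈ t.filter p, s i = 2 * ∑ i ∈ t, s i := by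
  rw [sum_ite, ← mul_sum, ← sum_filter_add_sum_filter_not t p s]
  noncomm_ring

theorem sum_ite_two_mul_self :
    (∑ i ∈ t, if p i then 2 * s i else s i) = ∑ i ∈ t, s i + ∑ i ∈ t.filter p, s i := by
  rw [sum_ite, ← mul_sum, ← sum_filter_add_sum_filter_not t p s]
  noncomm_ring

end

theorem stmt8 (N B : ℕ) (s : Fin N → ℕ) (hsum : ∑ i, s i = 2 * B)
    (first : Fin N → Bool) :
    ((∑ i, if first i then s i else 2 * s i) ≤ 3 * B ∧
     (∑ i, if first i then 2 * s i else s i) ≤ 3 * B) ↔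
    ∑ i ∈ Finset.univ.filter (fun i => first i = true), s i = B := by
  have hC₁ := sum_ite_self_two_mul_add_sum_filter univ (fun i => first i = true) s
  have hC₂ := sum_ite_two_mul_self univ (fun i => first i = true) s
  rw [hsum] at hC₁ hC₂
  omega
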